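/- Let ρ, σ be nonnegative integers and let μ : (0,∞)² → ℂ be of class C^{ρ+σ}. Then μ satisfies the Marcinkiewicz condition of order (ρ, σ) if and only if the function ν(λ,ξ) = μ(λ², ξ) on (0,∞)² satisfies the Marcinkiewicz condition of order (ρ, σ). -/

import Mathlib

open MeasureTheory

/-- The mixed partial derivative `∂_λ^i ∂_ξ^j μ(λ,ξ)`, taken within `(0,∞)` in each
variable. -/
noncomputable def mixedPartialWithin (i j : ℕ) (μ : ℝ → ℝ → ℂ) (lam ξ : ℝ) : ℂ :=
  iteratedDerivWithin i
    (fun l => iteratedDerivWithin j (fun t => μ l t) (Set.Ioi 0) ξ) (Set.Ioi 0) lam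

/-- The Marcinkiewicz condition of (integer) order `(ρ, σ)` for a function on
`(0,∞)²`: for all `i ≤ σ` and `i + j ≤ ρ + σ`,
`sup_{r₁,r₂>0} r₁^(2i−1) r₂^(2j−1) ∫_{r₁}^{2r₁} ∫_{r₂}^{2r₂} |∂_λ^i ∂_ξ^j μ|² dξ dλ < ∞`. -/
def MarcinkiewiczCond (ρ σ : ℕ) (μ : ℝ → ℝ → ℂ) : Prop :=
  ∀ i j : ℕ, i ≤ σ → i + j ≤ ρ + σ → ∃ A : ℝ, ∀ r₁ r₂ : ℝ, 0 < r₁ → 0 < r₂ →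
    r₁ ^ (2 * (i : ℤ) - 1) * r₂ ^ (2 * (j : ℤ) - 1) *
        ∫ lam in Set.Ioc r₁ (2 * r₁), ∫ ξ in Set.Ioc r₂ (2 * r₂),
          ‖mixedPartialWithin i j μ lam ξ‖ ^ 2 ≤ A

namespace Stmt16Aux
open Set

abbrev S : Set ℝ := Set.Ioi 0
abbrev P : Set (ℝ × ℝ) := S ×ˢ S

lemma uDS : UniqueDiffOn ℝ S := uniqueDiffOn_Ioi 0
lemma uDP : UniqueDiffOn ℝ P := (uniqueDiffOn_Ioi 0).prod (uniqueDiffOn_Ioi 0)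
lemma isOpenP : IsOpen P := (isOpen_Ioi).prod isOpen_Ioi

lemma step2 {F : ℝ × ℝ → ℂ} {n : ℕ}
    (hF : ContDiffOn ℝ (n+1 : ℕ) F P) :
    ContDiffOn ℝ n (fun p : ℝ × ℝ => derivWithin (fun t => F (p.1, t)) S p.2) P := by
  have hL : ContDiffOn ℝ n (fderivWithin ℝ F P) P := by
    apply hF.fderivWithin uDP
    norm_cast
  have key : ∀ p ∈ P,
      derivWithin (fun t => F (p.1, t)) S p.2
        = ContinuousLinearMap.apply ℝ ℂ ((0:ℝ),(1:ℝ)) (fderivWithin ℝ F P p) := by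
    intro p hp
    have hdF : HasFDerivWithinAt F (fderivWithin ℝ F P p) P p := by
      refine (hF.differentiableOn ?_ p hp).hasFDerivWithinAt
      exact_mod_cast Nat.succ_ne_zero n
    have hι : HasDerivWithinAt (fun t : ℝ => ((p.1 : ℝ), t)) ((0:ℝ),(1:ℝ)) S p.2 :=
      ((hasDerivAt_const _ _).prodMk (hasDerivAt_id _)).hasDerivWithinAt
    have hmaps : Set.MapsTo (fun t : ℝ => ((p.1 : ℝ), t)) S P := fun t ht => ⟨hp.1, ht⟩
    have := hdF.comp_hasDerivWithinAt p.2 hι hmaps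
    exact this.derivWithin (uDS p.2 hp.2)
  refine ContDiffOn.congr ?_ key
  exact (ContinuousLinearMap.apply ℝ ℂ ((0:ℝ),(1:ℝ))).contDiff.comp_contDiffOn hL

lemma step1 {F : ℝ × ℝ → ℂ} {n : ℕ}
    (hF : ContDiffOn ℝ (n+1 : ℕ) F P) :
    ContDiffOn ℝ n (fun p : ℝ × ℝ => derivWithin (fun l => F (l, p.2)) S p.1) P := by
  have hL : ContDiffOn ℝ n (fderivWithin ℝ F P) P := by
    apply hF.fderivWithin uDP
    norm_cast
  have key : ∀ p ∈ P,
      derivWithin (fun l => F (l, p.2)) S p.1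
        = ContinuousLinearMap.apply ℝ ℂ ((1:ℝ),(0:ℝ)) (fderivWithin ℝ F P p) := by
    intro p hp
    have hdF : HasFDerivWithinAt F (fderivWithin ℝ F P p) P p := by
      refine (hF.differentiableOn ?_ p hp).hasFDerivWithinAt
      exact_mod_cast Nat.succ_ne_zero n
    have hι : HasDerivWithinAt (fun l : ℝ => ((l : ℝ), p.2)) ((1:ℝ),(0:ℝ)) S p.1 :=
      ((hasDerivAt_id _).prodMk (hasDerivAt_const _ _)).hasDerivWithinAt
    have hmaps : Set.MapsTo (fun l : ℝ => ((l : ℝ), p.2)) S P := fun t ht => ⟨ht, hp.2⟩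
    have := hdF.comp_hasDerivWithinAt p.1 hι hmaps
    exact this.derivWithin (uDS p.1 hp.1)
  refine ContDiffOn.congr ?_ key
  exact (ContinuousLinearMap.apply ℝ ℂ ((1:ℝ),(0:ℝ))).contDiff.comp_contDiffOn hL


lemma iter2 {F : ℝ × ℝ → ℂ} {n j : ℕ} (hF : ContDiffOn ℝ (n : ℕ) F P) (hj : j ≤ n) :
    ContDiffOn ℝ ((n - j : ℕ))
      (fun p : ℝ × ℝ => iteratedDerivWithin j (fun t => F (p.1, t)) S p.2) P := by
  induction j generalizing F n with
  | zero => simpa [iteratedDerivWithin_zero] using hF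
  | succ j IH =>
    have h1 : 1 ≤ n := le_trans (Nat.succ_le_succ (Nat.zero_le j)) hj
    have hF' : ContDiffOn ℝ ((n - 1 : ℕ))
        (fun p : ℝ × ℝ => derivWithin (fun t => F (p.1, t)) S p.2) P := by
      apply step2 (n := n - 1)
      rw [Nat.sub_add_cancel h1]; exact hF
    have h2 := IH hF' (by omega)
    have hcast : (n - 1) - j = n - (j + 1) := by omega
    rw [hcast] at h2
    refine h2.congr ?_
    intro p hp
    rw [iteratedDerivWithin_succ']

lemma iter1 {F : ℝ × ℝ → ℂ} {n i : ℕ} (hF : ContDiffOn ℝ (n : ℕ) F P) (hi : i ≤ n) :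
    ContDiffOn ℝ ((n - i : ℕ))
      (fun p : ℝ × ℝ => iteratedDerivWithin i (fun l => F (l, p.2)) S p.1) P := by
  induction i generalizing F n with
  | zero => simpa [iteratedDerivWithin_zero] using hF
  | succ i IH =>
    have h1 : 1 ≤ n := le_trans (Nat.succ_le_succ (Nat.zero_le i)) hi
    have hF' : ContDiffOn ℝ ((n - 1 : ℕ))
        (fun p : ℝ × ℝ => derivWithin (fun l => F (l, p.2)) S p.1) P := by
      apply step1 (n := n - 1)
      rw [Nat.sub_add_cancel h1]; exact hF
    have h2 := IH hF' (by omega)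
    have hcast : (n - 1) - i = n - (i + 1) := by omega
    rw [hcast] at h2
    refine h2.congr ?_
    intro p hp
    rw [iteratedDerivWithin_succ']


lemma mpSmooth {μ : ℝ → ℝ → ℂ} {N i j : ℕ}
    (hsmooth : ContDiffOn ℝ (N : ℕ) (fun p : ℝ × ℝ => μ p.1 p.2) P)
    (hij : i + j ≤ N) :
    ContDiffOn ℝ ((N - j - i : ℕ)) (fun p : ℝ × ℝ => mixedPartialWithin i j μ p.1 p.2) P := by
  have h2 := iter2 (F := fun p : ℝ × ℝ => μ p.1 p.2) hsmooth (le_trans (Nat.le_add_left j i) hij)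
  exact iter1 (F := fun p : ℝ × ℝ => iteratedDerivWithin j (fun t => μ p.1 t) S p.2) h2 (by omega)

lemma mpCont {μ : ℝ → ℝ → ℂ} {N i j : ℕ}
    (hsmooth : ContDiffOn ℝ (N : ℕ) (fun p : ℝ × ℝ => μ p.1 p.2) P)
    (hij : i + j ≤ N) :
    ContinuousOn (fun p : ℝ × ℝ => mixedPartialWithin i j μ p.1 p.2) P :=
  (mpSmooth hsmooth hij).continuousOn


def Eexp (p q : ℤ) (n k : ℕ) : ℤ := p * k + (q - 1) * ((n : ℤ) - k)

noncomputable def genCoef (b a : ℝ) (p q : ℤ) : ℕ → ℕ → ℝ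
  | 0, 0 => 1
  | 0, _+1 => 0
  | n+1, 0 => ((Eexp p q n 0 : ℤ) : ℝ) * b * genCoef b a p q n 0
  | n+1, k+1 => ((Eexp p q n (k+1) : ℤ) : ℝ) * b * genCoef b a p q n (k+1)
      + a * genCoef b a p q n k

lemma genCoef_eq_zero (b a : ℝ) (p q : ℤ) : ∀ {n k : ℕ}, n < k → genCoef b a p q n k = 0 := by
  intro n
  induction n with
  | zero => intro k hk; match k, hk with
    | k+1, _ => rfl
  | succ n IH =>
    intro k hk
    match k, hk with
    | k+1, hk =>
      show ((Eexp p q n (k+1) : ℤ) : ℝ) * b * genCoef b a p q n (k+1)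
          + a * genCoef b a p q n k = 0
      rw [IH (by omega), IH (by omega)]; ring

variable {β φ : ℝ → ℝ} {a b : ℝ} {p q : ℤ}

lemma gen_expansion
    (hβpos : ∀ t ∈ S, 0 < β t)
    (hβd : ∀ t ∈ S, HasDerivAt β (b * β t ^ q) t)
    (hφd : ∀ t ∈ S, HasDerivAt φ (a * β t ^ p) t)
    (hφmaps : Set.MapsTo φ S S)
    {f : ℝ → ℂ} {n : ℕ} (hf : ContDiffOn ℝ (n : ℕ) f S)
    {i : ℕ} (hi : i ≤ n) : ∀ t ∈ S,
    iteratedDerivWithin i (fun s => f (φ s)) S t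
      = ∑ k ∈ Finset.range (i+1),
          (genCoef b a p q i k * β t ^ (Eexp p q i k)) • iteratedDerivWithin k f S (φ t) := by
  induction i with
  | zero =>
    intro t ht
    have : Eexp p q 0 0 = 0 := by simp [Eexp]
    simp [this, genCoef, iteratedDerivWithin_zero]
  | succ i IH =>
    intro t ht
    have hβne : β t ≠ 0 := ne_of_gt (hβpos t ht)
    have hi' : i ≤ n := by omega
    set F : ℕ → ℂ := fun k => iteratedDerivWithin k f S (φ t) with hF
    -- rewrite LHS as derivWithin of the expansion
    have hLHS : iteratedDerivWithin (i+1) (fun s => f (φ s)) S t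
        = derivWithin (fun s => ∑ k ∈ Finset.range (i+1),
            (genCoef b a p q i k * β s ^ (Eexp p q i k)) • iteratedDerivWithin k f S (φ s)) S t := by
      rw [iteratedDerivWithin_succ]
      exact derivWithin_congr (fun x hx => IH hi' x hx) (IH hi' t ht)
    -- derivative of each summand
    have hterm : ∀ k ∈ Finset.range (i+1), HasDerivWithinAt
        (fun s => (genCoef b a p q i k * β s ^ (Eexp p q i k)) • iteratedDerivWithin k f S (φ s))
        ((genCoef b a p q i k * β t ^ (Eexp p q i k)) • ((a * β t ^ p) • F (k+1))
          + (genCoef b a p q i k * (((Eexp p q i k : ℤ) : ℝ) * β t ^ (Eexp p q i k - 1)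
              * (b * β t ^ q))) • F k) S t := by
      intro k hk
      have hkn : (k : WithTop ℕ∞) < (n : WithTop ℕ∞) := by
        have : k < n := by simp only [Finset.mem_range] at hk; omega
        exact_mod_cast this
      have hw : HasDerivWithinAt (fun s => genCoef b a p q i k * β s ^ (Eexp p q i k))
          (genCoef b a p q i k * (((Eexp p q i k : ℤ) : ℝ) * β t ^ (Eexp p q i k - 1)
            * (b * β t ^ q))) S t := by
        have hz := (hasDerivAt_zpow (Eexp p q i k) (β t) (Or.inl hβne)).comp t (hβd t ht)
        exact (hz.hasDerivWithinAt.const_mul _)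
      have hdiffk := hf.differentiableOn_iteratedDerivWithin hkn uDS
      have hdW : HasDerivWithinAt (iteratedDerivWithin k f S) (F (k+1)) S (φ t) := by
        have h1 := (hdiffk (φ t) (hφmaps ht)).hasDerivWithinAt
        rwa [show derivWithin (iteratedDerivWithin k f S) S (φ t) = F (k+1) from
          (congrFun iteratedDerivWithin_succ (φ t)).symm] at h1
      have hcomp : HasDerivWithinAt (fun s => iteratedDerivWithin k f S (φ s))
          ((a * β t ^ p) • F (k+1)) S t :=
        HasDerivWithinAt.scomp t hdW ((hφd t ht).hasDerivWithinAt) hφmaps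
      exact hw.smul hcomp
    have hΦd := HasDerivWithinAt.fun_sum hterm
    rw [hLHS, hΦd.derivWithin (uDS t ht)]
    -- now pure algebra
    set c : ℕ → ℝ := genCoef b a p q i with hc
    set c' : ℕ → ℝ := genCoef b a p q (i+1) with hc'
    have hczero : c (i+1) = 0 := genCoef_eq_zero b a p q (by omega)
    have e1 : ∀ k : ℕ, c k * β t ^ (Eexp p q i k) * (a * β t ^ p)
        = a * c k * β t ^ (Eexp p q (i+1) (k+1)) := by
      intro k
      rw [show Eexp p q (i+1) (k+1) = Eexp p q i k + p by simp only [Eexp]; push_cast; ring]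
      rw [zpow_add₀ hβne]; ring
    have e2 : ∀ k : ℕ, c k * (((Eexp p q i k : ℤ) : ℝ) * β t ^ (Eexp p q i k - 1) * (b * β t ^ q))
        = c k * ((Eexp p q i k : ℤ) : ℝ) * b * β t ^ (Eexp p q (i+1) k) := by
      intro k
      rw [show Eexp p q (i+1) k = (Eexp p q i k - 1) + q by simp only [Eexp]; push_cast; ring]
      rw [zpow_add₀ hβne]; ring
    have hstep1 : ∑ k ∈ Finset.range (i+1),
        ((c k * β t ^ (Eexp p q i k)) • ((a * β t ^ p) • F (k+1))
          + (c k * (((Eexp p q i k : ℤ) : ℝ) * β t ^ (Eexp p q i k - 1) * (b * β t ^ q))) • F k)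
        = (∑ k ∈ Finset.range (i+1), (a * c k * β t ^ (Eexp p q (i+1) (k+1))) • F (k+1))
          + ∑ k ∈ Finset.range (i+1),
              (c k * ((Eexp p q i k : ℤ) : ℝ) * b * β t ^ (Eexp p q (i+1) k)) • F k := by
      rw [← Finset.sum_add_distrib]
      refine Finset.sum_congr rfl fun k _ => ?_
      rw [smul_smul, e1 k, e2 k]
    rw [hstep1]
    have hBsum : ∑ k ∈ Finset.range (i+1),
          (c k * ((Eexp p q i k : ℤ) : ℝ) * b * β t ^ (Eexp p q (i+1) k)) • F k
        = (∑ k ∈ Finset.range (i+1),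
            (c (k+1) * ((Eexp p q i (k+1) : ℤ) : ℝ) * b * β t ^ (Eexp p q (i+1) (k+1))) • F (k+1))
          + (c 0 * ((Eexp p q i 0 : ℤ) : ℝ) * b * β t ^ (Eexp p q (i+1) 0)) • F 0 := by
      rw [← Finset.sum_range_succ' (fun k =>
        (c k * ((Eexp p q i k : ℤ) : ℝ) * b * β t ^ (Eexp p q (i+1) k)) • F k) (i+1)]
      rw [Finset.sum_range_succ (fun k =>
        (c k * ((Eexp p q i k : ℤ) : ℝ) * b * β t ^ (Eexp p q (i+1) k)) • F k) (i+1)]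
      rw [hczero]
      simp
    rw [hBsum]
    rw [Finset.sum_range_succ' (fun k => (c' k * β t ^ (Eexp p q (i+1) k)) • F k) (i+1)]
    have hsplit : ∀ k ∈ Finset.range (i+1), (c' (k+1) * β t ^ (Eexp p q (i+1) (k+1))) • F (k+1)
        = (a * c k * β t ^ (Eexp p q (i+1) (k+1))) • F (k+1)
          + (c (k+1) * ((Eexp p q i (k+1) : ℤ) : ℝ) * b * β t ^ (Eexp p q (i+1) (k+1))) • F (k+1) := by
      intro k _
      have hrec : c' (k+1) = ((Eexp p q i (k+1) : ℤ) : ℝ) * b * c (k+1) + a * c k := rfl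
      rw [hrec]
      module
    rw [Finset.sum_congr rfl hsplit, Finset.sum_add_distrib]
    have h0 : (c' 0 * β t ^ (Eexp p q (i+1) 0)) • F 0
        = (c 0 * ((Eexp p q i 0 : ℤ) : ℝ) * b * β t ^ (Eexp p q (i+1) 0)) • F 0 := by
      have hrec : c' 0 = ((Eexp p q i 0 : ℤ) : ℝ) * b * c 0 := rfl
      rw [hrec]
      congr 1
      ring
    rw [h0]
    abel


lemma contOn_param_integral {g : ℝ × ℝ → ℝ} (hg : ContinuousOn g P) {r₂ : ℝ} (hr₂ : 0 < r₂) :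
    ContinuousOn (fun m => ∫ ξ in Set.Ioc r₂ (2*r₂), g (m, ξ)) S := by
  intro m₀ hm₀
  apply ContinuousAt.continuousWithinAt
  have hm₀' : (0:ℝ) < m₀ := hm₀
  have hsub : (Set.Icc (m₀/2) (2*m₀) ×ˢ Set.Icc r₂ (2*r₂)) ⊆ P := by
    rintro ⟨x, y⟩ ⟨hx, hy⟩
    exact ⟨lt_of_lt_of_le (by linarith) hx.1, lt_of_lt_of_le hr₂ hy.1⟩
  obtain ⟨C, hC⟩ : ∃ C, ∀ z ∈ (Set.Icc (m₀/2) (2*m₀) ×ˢ Set.Icc r₂ (2*r₂)), ‖g z‖ ≤ C :=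
    (isCompact_Icc.prod isCompact_Icc).exists_bound_of_continuousOn (hg.mono hsub)
  have hU : Set.Ioo (m₀/2) (2*m₀) ∈ nhds m₀ := Ioo_mem_nhds (by linarith) (by linarith)
  apply MeasureTheory.continuousAt_of_dominated (bound := fun _ => C)
  · filter_upwards [hU] with m hm
    apply ContinuousOn.aestronglyMeasurable ?_ measurableSet_Ioc
    have hmpos : (0:ℝ) < m := lt_trans (by linarith) hm.1
    refine (hg.comp ((continuous_const.prodMk continuous_id).continuousOn) ?_)
    intro ξ hξ
    exact ⟨hmpos, lt_of_lt_of_le hr₂ hξ.1.le⟩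
  · filter_upwards [hU] with m hm
    refine (MeasureTheory.ae_restrict_iff' measurableSet_Ioc).2
      (Filter.Eventually.of_forall fun ξ hξ => ?_)
    exact hC (m, ξ) ⟨⟨hm.1.le, hm.2.le⟩, ⟨hξ.1.le, hξ.2⟩⟩
  · exact (integrableOn_const measure_Ioc_lt_top.ne)
  · refine (MeasureTheory.ae_restrict_iff' measurableSet_Ioc).2
      (Filter.Eventually.of_forall fun ξ hξ => ?_)
    have hz : ((m₀ : ℝ), ξ) ∈ P := ⟨hm₀', lt_of_lt_of_le hr₂ hξ.1.le⟩
    have hc : ContinuousAt g (m₀, ξ) := hg.continuousAt (isOpenP.mem_nhds hz)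
    exact hc.tendsto.comp (Continuous.tendsto (continuous_id.prodMk continuous_const) m₀)


lemma zpow_pair {x : ℝ} (hx : x ≠ 0) {m n : ℤ} (h : m + n = 0) : x ^ m * x ^ n = 1 := by
  rw [← zpow_add₀ hx, h, zpow_zero]

set_option maxHeartbeats 2000000 in
lemma forward {ρ σ : ℕ} {μ : ℝ → ℝ → ℂ}
    (hsmooth : ContDiffOn ℝ ((ρ + σ : ℕ) : ℕ) (fun z : ℝ × ℝ => μ z.1 z.2) P)
    {φ β : ℝ → ℝ} {a b : ℝ} {p q : ℤ}
    (ha : 0 < a)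
    (hβpos : ∀ t ∈ S, 0 < β t)
    (hβd : ∀ t ∈ S, HasDerivAt β (b * β t ^ q) t)
    (hφd : ∀ t ∈ S, HasDerivAt φ (a * β t ^ p) t)
    (hφmaps : Set.MapsTo φ S S)
    (hφsm : ContDiffOn ℝ ((ρ + σ : ℕ) : ℕ) φ S)
    (hφmono : StrictMonoOn φ S)
    (hφimg : ∀ r : ℝ, 0 < r → φ '' Set.Ioc r (2*r) = Set.Ioc (φ r) (φ (2*r)))
    (hφ4 : ∀ r : ℝ, 0 < r → φ (2*r) ≤ 4 * φ r)
    (hkey : ∀ i k : ℕ, k ≤ i → i ≤ σ → ∃ K : ℝ, 0 ≤ K ∧ ∀ r t : ℝ, 0 < r →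
        t ∈ Set.Ioc r (2*r) →
        β t ^ (2 * Eexp p q i k - p) / a ≤ K * r ^ (1 - 2*(i:ℤ)) * (φ r) ^ (2*(k:ℤ) - 1))
    (hμ : MarcinkiewiczCond ρ σ μ) :
    MarcinkiewiczCond ρ σ (fun l ξ => μ (φ l) ξ) := by
  classical
  intro i j hi hij
  -- constants from hkey
  choose! K hK0 hKb using fun (k : ℕ) (hk : k ≤ i) => hkey i k hk hi
  -- constants from the Marcinkiewicz condition for μ
  choose! A hAb using fun (k : ℕ) (hk : k ≤ i) => hμ k j (le_trans hk hi) (by omega)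
  have hA0 : ∀ k : ℕ, k ≤ i → 0 ≤ A k := by
    intro k hk
    refine le_trans ?_ (hAb k hk 1 1 one_pos one_pos)
    have h1 : (0:ℝ) ≤ ∫ lam in Set.Ioc (1:ℝ) (2*1), ∫ ξ in Set.Ioc (1:ℝ) (2*1),
        ‖mixedPartialWithin k j μ lam ξ‖ ^ 2 :=
      integral_nonneg fun lam => integral_nonneg fun ξ => by positivity
    positivity
  refine ⟨∑ k ∈ Finset.range (i+1), ((i:ℝ)+1) * (genCoef b a p q i k)^2 *
      (K k * A k * (1 + (2:ℝ) ^ ((1:ℤ) - 2*(k:ℤ)))), ?_⟩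
  intro r₁ r₂ hr₁ hr₂
  set N : ℕ := ρ + σ with hN
  have hD1S : Set.Ioc r₁ (2*r₁) ⊆ S := fun x hx => lt_trans hr₁ hx.1
  have hD2S : Set.Ioc r₂ (2*r₂) ⊆ S := fun x hx => lt_trans hr₂ hx.1
  have hI1S : Set.Icc r₁ (2*r₁) ⊆ S := fun x hx => lt_of_lt_of_le hr₁ hx.1
  have hI2S : Set.Icc r₂ (2*r₂) ⊆ S := fun x hx => lt_of_lt_of_le hr₂ hx.1
  have hboxP : (Set.Icc r₁ (2*r₁) ×ˢ Set.Icc r₂ (2*r₂)) ⊆ P :=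
    fun z hz => ⟨hI1S hz.1, hI2S hz.2⟩
  have hDbox : (Set.Ioc r₁ (2*r₁) ×ˢ Set.Ioc r₂ (2*r₂)) ⊆
      (Set.Icc r₁ (2*r₁) ×ˢ Set.Icc r₂ (2*r₂)) :=
    Set.prod_mono Set.Ioc_subset_Icc_self Set.Ioc_subset_Icc_self
  have hboxcomp : IsCompact (Set.Icc r₁ (2*r₁) ×ˢ Set.Icc r₂ (2*r₂)) :=
    isCompact_Icc.prod isCompact_Icc
  have hDmeas : MeasurableSet (Set.Ioc r₁ (2*r₁) ×ˢ Set.Ioc r₂ (2*r₂)) :=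
    measurableSet_Ioc.prod measurableSet_Ioc
  have hintD : ∀ g : ℝ × ℝ → ℝ, ContinuousOn g P →
      IntegrableOn g (Set.Ioc r₁ (2*r₁) ×ˢ Set.Ioc r₂ (2*r₂)) := fun g hg =>
    (((hg.mono hboxP).integrableOn_compact hboxcomp).mono_set hDbox)
  -- smoothness of ν
  have hφc : ContinuousOn φ S := fun t ht => ((hφd t ht).continuousAt).continuousWithinAt
  have hβc : ContinuousOn β S := fun t ht => ((hβd t ht).continuousAt).continuousWithinAt
  have hsmoothν : ContDiffOn ℝ (N : ℕ) (fun z : ℝ × ℝ => μ (φ z.1) z.2) P := by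
    have h1 : ContDiffOn ℝ (N : ℕ) (fun z : ℝ × ℝ => (φ z.1, z.2)) P :=
      (hφsm.comp (contDiff_fst.contDiffOn) (fun z hz => hz.1)).prodMk
        (contDiff_snd.contDiffOn)
    exact hsmooth.comp h1 (fun z hz => ⟨hφmaps hz.1, hz.2⟩)
  -- continuity of the integrands
  have hQνc : ContinuousOn (fun z : ℝ × ℝ =>
      ‖mixedPartialWithin i j (fun l ξ => μ (φ l) ξ) z.1 z.2‖ ^ 2) P :=
    ((mpCont hsmoothν hij).norm).pow 2
  have hQc : ∀ k : ℕ, k ≤ i → ContinuousOn (fun z : ℝ × ℝ =>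
      ‖mixedPartialWithin k j μ z.1 z.2‖ ^ 2) P := fun k hk =>
    ((mpCont hsmooth (by omega : k + j ≤ N)).norm).pow 2
  have hφzc : ContinuousOn (fun z : ℝ × ℝ => (φ z.1, z.2)) P :=
    (hφc.comp (continuous_fst.continuousOn) (fun z hz => hz.1)).prodMk
      (continuous_snd.continuousOn)
  have hβec : ∀ e : ℤ, ContinuousOn (fun z : ℝ × ℝ => (β z.1 ^ e) ^ 2) P := by
    intro e
    refine ContinuousOn.pow ?_ 2
    refine ContinuousOn.zpow₀ (hβc.comp (continuous_fst.continuousOn) fun z hz => hz.1) e ?_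
    exact fun z hz => Or.inl (ne_of_gt (hβpos z.1 hz.1))
  have hGc : ∀ k : ℕ, k ≤ i → ContinuousOn (fun z : ℝ × ℝ =>
      (genCoef b a p q i k)^2 * ((β z.1 ^ (Eexp p q i k)) ^ 2 *
        ‖mixedPartialWithin k j μ (φ z.1) z.2‖ ^ 2)) P := by
    intro k hk
    have hc2 : ContinuousOn (fun z : ℝ × ℝ =>
        ‖mixedPartialWithin k j μ (φ z.1) z.2‖ ^ 2) P := by
      apply ContinuousOn.comp' (t := P) (hQc k hk) hφzc (fun z hz => ⟨hφmaps hz.1, hz.2⟩)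
    exact continuousOn_const.mul ((hβec (Eexp p q i k)).mul hc2)
  -- W and its continuity
  set W : ℕ → ℝ → ℝ := fun k m => ∫ ξ in Set.Ioc r₂ (2*r₂),
    ‖mixedPartialWithin k j μ m ξ‖ ^ 2 with hW
  have hWc : ∀ k : ℕ, k ≤ i → ContinuousOn (W k) S := fun k hk =>
    contOn_param_integral (hQc k hk) hr₂
  have hWnonneg : ∀ k m, 0 ≤ W k m := fun k m =>
    integral_nonneg fun ξ => by positivity
  -- the expansion
  have hexp : ∀ z ∈ (Set.Ioc r₁ (2*r₁) ×ˢ Set.Ioc r₂ (2*r₂)),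
      mixedPartialWithin i j (fun l ξ => μ (φ l) ξ) z.1 z.2
        = ∑ k ∈ Finset.range (i+1), (genCoef b a p q i k * β z.1 ^ (Eexp p q i k)) •
            mixedPartialWithin k j μ (φ z.1) z.2 := by
    rintro ⟨lam, ξ⟩ ⟨h1, h2⟩
    have hξS : ξ ∈ S := hD2S h2
    have hlamS : lam ∈ S := hD1S h1
    have hfξ : ContDiffOn ℝ ((N - j : ℕ))
        (fun m => iteratedDerivWithin j (fun t => μ m t) S ξ) S := by
      have h2' := iter2 (F := fun z : ℝ × ℝ => μ z.1 z.2) hsmooth (by omega : j ≤ N)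
      have hemb : ContDiffOn ℝ ((N - j : ℕ)) (fun m : ℝ => ((m : ℝ), ξ)) S :=
        (contDiff_id.prodMk contDiff_const).contDiffOn
      exact h2'.comp hemb (fun m hm => ⟨hm, hξS⟩)
    exact gen_expansion hβpos hβd hφd hφmaps hfξ (by omega : i ≤ N - j) lam hlamS
  -- pointwise bound
  have hpt : ∀ z ∈ (Set.Ioc r₁ (2*r₁) ×ˢ Set.Ioc r₂ (2*r₂)),
      ‖mixedPartialWithin i j (fun l ξ => μ (φ l) ξ) z.1 z.2‖ ^ 2
        ≤ ((i:ℝ)+1) * ∑ k ∈ Finset.range (i+1), (genCoef b a p q i k)^2 *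
            ((β z.1 ^ (Eexp p q i k)) ^ 2 * ‖mixedPartialWithin k j μ (φ z.1) z.2‖ ^ 2) := by
    intro z hz
    rw [hexp z hz]
    calc ‖∑ k ∈ Finset.range (i+1), (genCoef b a p q i k * β z.1 ^ (Eexp p q i k)) •
            mixedPartialWithin k j μ (φ z.1) z.2‖ ^ 2
        ≤ (∑ k ∈ Finset.range (i+1), ‖(genCoef b a p q i k * β z.1 ^ (Eexp p q i k)) •
            mixedPartialWithin k j μ (φ z.1) z.2‖) ^ 2 := by
          apply pow_le_pow_left₀ (norm_nonneg _) (norm_sum_le _ _)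
      _ ≤ (Finset.range (i+1)).card * ∑ k ∈ Finset.range (i+1),
            ‖(genCoef b a p q i k * β z.1 ^ (Eexp p q i k)) •
              mixedPartialWithin k j μ (φ z.1) z.2‖ ^ 2 := by
          exact sq_sum_le_card_mul_sum_sq
      _ = ((i:ℝ)+1) * ∑ k ∈ Finset.range (i+1), (genCoef b a p q i k)^2 *
            ((β z.1 ^ (Eexp p q i k)) ^ 2 * ‖mixedPartialWithin k j μ (φ z.1) z.2‖ ^ 2) := by
          rw [Finset.card_range]
          push_cast
          congr 1
          refine Finset.sum_congr rfl fun k _ => ?_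
          rw [norm_smul, Real.norm_eq_abs, mul_pow, sq_abs, mul_pow]
          ring
  -- slice integrability helpers
  have hsliceC : ∀ (g : ℝ → ℝ → ℝ), ContinuousOn (fun z : ℝ × ℝ => g z.1 z.2) P →
      ∀ lam ∈ S, IntegrableOn (fun ξ => g lam ξ) (Set.Ioc r₂ (2*r₂)) := by
    intro g hg lam hlam
    have hc : ContinuousOn (fun ξ => g lam ξ) (Set.Icc r₂ (2*r₂)) := by
      apply ContinuousOn.comp' (t := P) hg
        ((continuous_const.prodMk continuous_id).continuousOn)
        (fun ξ hξ => ⟨hlam, hI2S hξ⟩)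
    exact (hc.integrableOn_compact isCompact_Icc).mono_set Set.Ioc_subset_Icc_self
  have hlamint : ∀ (h : ℝ → ℝ), ContinuousOn h S → IntegrableOn h (Set.Ioc r₁ (2*r₁)) :=
    fun h hh => ((hh.mono hI1S).integrableOn_compact isCompact_Icc).mono_set
      Set.Ioc_subset_Icc_self
  -- continuity of the RHS integrand
  have hRHSc : ContinuousOn (fun z : ℝ × ℝ => ((i:ℝ)+1) * ∑ k ∈ Finset.range (i+1),
      (genCoef b a p q i k)^2 * ((β z.1 ^ (Eexp p q i k)) ^ 2 *
        ‖mixedPartialWithin k j μ (φ z.1) z.2‖ ^ 2)) P := by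
    refine continuousOn_const.mul ?_
    refine continuousOn_finset_sum _ (fun k hk => ?_)
    exact hGc k (by simpa using Finset.mem_range.1 hk |> Nat.lt_succ_iff.mp)
  -- outer monotonicity
  have houter : ∫ lam in Set.Ioc r₁ (2*r₁), ∫ ξ in Set.Ioc r₂ (2*r₂),
      ‖mixedPartialWithin i j (fun l ξ => μ (φ l) ξ) lam ξ‖ ^ 2
      ≤ ∫ lam in Set.Ioc r₁ (2*r₁), ∫ ξ in Set.Ioc r₂ (2*r₂), ((i:ℝ)+1) *
          ∑ k ∈ Finset.range (i+1), (genCoef b a p q i k)^2 *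
            ((β lam ^ (Eexp p q i k)) ^ 2 * ‖mixedPartialWithin k j μ (φ lam) ξ‖ ^ 2) := by
    have hint1 : IntegrableOn (fun lam => ∫ ξ in Set.Ioc r₂ (2*r₂),
        ‖mixedPartialWithin i j (fun l ξ => μ (φ l) ξ) lam ξ‖ ^ 2) (Set.Ioc r₁ (2*r₁)) :=
      hlamint _ (contOn_param_integral hQνc hr₂)
    have hint2 : IntegrableOn (fun lam => ∫ ξ in Set.Ioc r₂ (2*r₂), ((i:ℝ)+1) *
        ∑ k ∈ Finset.range (i+1), (genCoef b a p q i k)^2 *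
          ((β lam ^ (Eexp p q i k)) ^ 2 * ‖mixedPartialWithin k j μ (φ lam) ξ‖ ^ 2))
        (Set.Ioc r₁ (2*r₁)) :=
      hlamint _ (contOn_param_integral hRHSc hr₂)
    refine setIntegral_mono_on hint1 hint2 measurableSet_Ioc ?_
    intro lam hlam
    refine setIntegral_mono_on
      (hsliceC (fun l x => ‖mixedPartialWithin i j (fun l ξ => μ (φ l) ξ) l x‖ ^ 2) hQνc
        lam (hD1S hlam))
      (hsliceC (fun l x => ((i:ℝ)+1) * ∑ k ∈ Finset.range (i+1), (genCoef b a p q i k)^2 *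
          ((β l ^ (Eexp p q i k)) ^ 2 * ‖mixedPartialWithin k j μ (φ l) x‖ ^ 2)) hRHSc
        lam (hD1S hlam))
      measurableSet_Ioc ?_
    intro ξ hξ
    exact hpt (lam, ξ) ⟨hlam, hξ⟩
  -- compute the RHS iterated integral
  have hinner : ∀ lam ∈ S, ∫ ξ in Set.Ioc r₂ (2*r₂), ((i:ℝ)+1) *
      ∑ k ∈ Finset.range (i+1), (genCoef b a p q i k)^2 *
        ((β lam ^ (Eexp p q i k)) ^ 2 * ‖mixedPartialWithin k j μ (φ lam) ξ‖ ^ 2)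
      = ((i:ℝ)+1) * ∑ k ∈ Finset.range (i+1), (genCoef b a p q i k)^2 *
          ((β lam ^ (Eexp p q i k)) ^ 2 * W k (φ lam)) := by
    intro lam hlam
    rw [integral_const_mul]
    congr 1
    rw [integral_finset_sum]
    · refine Finset.sum_congr rfl fun k hk => ?_
      rw [integral_const_mul, integral_const_mul]
    · intro k hk
      have hk' : k ≤ i := Nat.lt_succ_iff.mp (Finset.mem_range.1 hk)
      refine Integrable.const_mul ?_ _
      refine Integrable.const_mul ?_ _
      exact hsliceC (fun l x => ‖mixedPartialWithin k j μ (φ l) x‖ ^ 2)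
        (by apply ContinuousOn.comp' (t := P) (hQc k hk') hφzc
              (fun z hz => ⟨hφmaps hz.1, hz.2⟩)) lam hlam
  have houter2 : ∫ lam in Set.Ioc r₁ (2*r₁), ∫ ξ in Set.Ioc r₂ (2*r₂), ((i:ℝ)+1) *
      ∑ k ∈ Finset.range (i+1), (genCoef b a p q i k)^2 *
        ((β lam ^ (Eexp p q i k)) ^ 2 * ‖mixedPartialWithin k j μ (φ lam) ξ‖ ^ 2)
      = ((i:ℝ)+1) * ∑ k ∈ Finset.range (i+1), (genCoef b a p q i k)^2 *
          ∫ lam in Set.Ioc r₁ (2*r₁), (β lam ^ (Eexp p q i k)) ^ 2 * W k (φ lam) := by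
    rw [setIntegral_congr_fun measurableSet_Ioc (fun lam hlam => hinner lam (hD1S hlam))]
    rw [integral_const_mul]
    congr 1
    rw [integral_finset_sum]
    · exact Finset.sum_congr rfl fun k hk => integral_const_mul _ _
    · intro k hk
      have hk' : k ≤ i := Nat.lt_succ_iff.mp (Finset.mem_range.1 hk)
      refine Integrable.const_mul ?_ _
      refine hlamint _ ?_
      refine ContinuousOn.mul ?_ ?_
      · refine ContinuousOn.pow ?_ 2
        exact hβc.zpow₀ _ (fun t ht => Or.inl (ne_of_gt (hβpos t ht)))
      · exact ContinuousOn.comp' (t := S) (hWc k hk') hφc hφmaps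
  -- the per-k core bound
  have hcore : ∀ k : ℕ, k ≤ i →
      r₁ ^ (2 * (i : ℤ) - 1) * r₂ ^ (2 * (j : ℤ) - 1) *
        ∫ lam in Set.Ioc r₁ (2*r₁), (β lam ^ (Eexp p q i k)) ^ 2 * W k (φ lam)
      ≤ K k * A k * (1 + (2:ℝ) ^ ((1:ℤ) - 2*(k:ℤ))) := by
    intro k hk
    have hxpos : 0 < φ r₁ := hφmaps hr₁
    have hx4S : Set.Icc (φ r₁) (4 * φ r₁) ⊆ S := fun y hy => lt_of_lt_of_le hxpos hy.1
    -- pointwise bound on D1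
    have hptk : ∀ lam ∈ Set.Ioc r₁ (2*r₁), (β lam ^ (Eexp p q i k)) ^ 2 * W k (φ lam)
        ≤ (K k * r₁ ^ (1 - 2*(i:ℤ)) * (φ r₁) ^ (2*(k:ℤ) - 1)) *
            ((a * β lam ^ p) * W k (φ lam)) := by
      intro lam hlam
      have hlamS : lam ∈ S := hD1S hlam
      have hβl : 0 < β lam := hβpos lam hlamS
      have hWn : 0 ≤ W k (φ lam) := hWnonneg k (φ lam)
      have hid : (β lam ^ (Eexp p q i k)) ^ 2 * W k (φ lam)
          = (β lam ^ (2 * Eexp p q i k - p) / a) * ((a * β lam ^ p) * W k (φ lam)) := by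
        have hane : a ≠ 0 := ne_of_gt ha
        have hβne : β lam ≠ 0 := ne_of_gt hβl
        have h2 : β lam ^ (2 * Eexp p q i k - p) * β lam ^ p
            = (β lam ^ Eexp p q i k) ^ 2 := by
          rw [← zpow_add₀ hβne,
            show 2 * Eexp p q i k - p + p = Eexp p q i k + Eexp p q i k by ring,
            zpow_add₀ hβne]
          ring
        have h3 : (β lam ^ (2 * Eexp p q i k - p) / a) * ((a * β lam ^ p) * W k (φ lam))
            = (β lam ^ (2 * Eexp p q i k - p) * β lam ^ p) * W k (φ lam) * (a / a) := by
          ring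
        rw [h3, h2, div_self hane]
        ring
      rw [hid]
      refine mul_le_mul_of_nonneg_right (hKb k hk r₁ lam hr₁ hlam) ?_
      positivity
    -- integrate the pointwise bound
    have hWφc : ContinuousOn (fun lam => W k (φ lam)) S :=
      ContinuousOn.comp' (t := S) (hWc k hk) hφc hφmaps
    have hβWc : ContinuousOn (fun lam => (β lam ^ (Eexp p q i k)) ^ 2 * W k (φ lam)) S := by
      refine ContinuousOn.mul ?_ hWφc
      exact (hβc.zpow₀ _ (fun t ht => Or.inl (ne_of_gt (hβpos t ht)))).pow 2
    have haβWc : ContinuousOn (fun lam => (a * β lam ^ p) * W k (φ lam)) S := by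
      refine ContinuousOn.mul ?_ hWφc
      exact continuousOn_const.mul
        (hβc.zpow₀ _ (fun t ht => Or.inl (ne_of_gt (hβpos t ht))))
    have hmono1 : ∫ lam in Set.Ioc r₁ (2*r₁), (β lam ^ (Eexp p q i k)) ^ 2 * W k (φ lam)
        ≤ (K k * r₁ ^ (1 - 2*(i:ℤ)) * (φ r₁) ^ (2*(k:ℤ) - 1)) *
            ∫ lam in Set.Ioc r₁ (2*r₁), (a * β lam ^ p) * W k (φ lam) := by
      rw [← integral_const_mul]
      exact setIntegral_mono_on (hlamint _ hβWc)
        ((hlamint _ haβWc).const_mul _) measurableSet_Ioc hptk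
    -- change of variables
    have hder : ∀ lam ∈ Set.Ioc r₁ (2*r₁),
        HasDerivWithinAt φ (a * β lam ^ p) (Set.Ioc r₁ (2*r₁)) lam :=
      fun lam hl => ((hφd lam (hD1S hl)).hasDerivWithinAt).mono hD1S
    have hinj : Set.InjOn φ (Set.Ioc r₁ (2*r₁)) := (hφmono.mono hD1S).injOn
    have hchg : ∫ lam in Set.Ioc r₁ (2*r₁), (a * β lam ^ p) * W k (φ lam)
        = ∫ t in Set.Ioc (φ r₁) (φ (2*r₁)), W k t := by
      have h1 := MeasureTheory.integral_image_eq_integral_abs_deriv_smul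
        measurableSet_Ioc hder hinj (W k)
      rw [hφimg r₁ hr₁] at h1
      rw [h1]
      refine setIntegral_congr_fun measurableSet_Ioc (fun lam hlam => ?_)
      have hβl : 0 < β lam := hβpos lam (hD1S hlam)
      rw [smul_eq_mul, abs_of_pos (by positivity)]
    -- split the image interval into two dyadic pieces
    have hIWbig : IntegrableOn (W k) (Set.Ioc (φ r₁) (4 * φ r₁)) :=
      (((hWc k hk).mono hx4S).integrableOn_compact isCompact_Icc).mono_set
        Set.Ioc_subset_Icc_self
    have hsplit1 : ∫ t in Set.Ioc (φ r₁) (φ (2*r₁)), W k t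
        ≤ ∫ t in Set.Ioc (φ r₁) (4 * φ r₁), W k t := by
      refine setIntegral_mono_set hIWbig
        (Filter.Eventually.of_forall (fun t => hWnonneg k t)) ?_
      exact HasSubset.Subset.eventuallyLE (Set.Ioc_subset_Ioc le_rfl (hφ4 r₁ hr₁))
    have hsplit2 : ∫ t in Set.Ioc (φ r₁) (4 * φ r₁), W k t
        = (∫ t in Set.Ioc (φ r₁) (2 * φ r₁), W k t)
          + ∫ t in Set.Ioc (2 * φ r₁) (4 * φ r₁), W k t := by
      rw [← Set.Ioc_union_Ioc_eq_Ioc (by linarith : φ r₁ ≤ 2 * φ r₁)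
        (by linarith : 2 * φ r₁ ≤ 4 * φ r₁)]
      exact setIntegral_union (Set.Ioc_disjoint_Ioc_of_le le_rfl) measurableSet_Ioc
        (hIWbig.mono_set (Set.Ioc_subset_Ioc le_rfl (by linarith)))
        (hIWbig.mono_set (Set.Ioc_subset_Ioc (by linarith) le_rfl))
    -- bound each dyadic piece via the hypothesis on μ
    have hbound : ∀ s : ℝ, 0 < s → ∫ t in Set.Ioc s (2*s), W k t
        ≤ A k * s ^ (1 - 2*(k:ℤ)) * r₂ ^ (1 - 2*(j:ℤ)) := by
      intro s hs
      have h := hAb k hk s r₂ hs hr₂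
      have hXY : (0:ℝ) < s ^ (2*(k:ℤ) - 1) * r₂ ^ (2*(j:ℤ) - 1) := by positivity
      rw [← mul_le_mul_iff_right₀ hXY]
      have hrhs : s ^ (2*(k:ℤ) - 1) * r₂ ^ (2*(j:ℤ) - 1) *
          (A k * s ^ (1 - 2*(k:ℤ)) * r₂ ^ (1 - 2*(j:ℤ))) = A k := by
        have e1 : s ^ (2*(k:ℤ) - 1) * s ^ (1 - 2*(k:ℤ)) = 1 :=
          zpow_pair (ne_of_gt hs) (by ring)
        have e2 : r₂ ^ (2*(j:ℤ) - 1) * r₂ ^ (1 - 2*(j:ℤ)) = 1 :=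
          zpow_pair (ne_of_gt hr₂) (by ring)
        calc s ^ (2*(k:ℤ) - 1) * r₂ ^ (2*(j:ℤ) - 1) *
            (A k * s ^ (1 - 2*(k:ℤ)) * r₂ ^ (1 - 2*(j:ℤ)))
            = A k * ((s ^ (2*(k:ℤ) - 1) * s ^ (1 - 2*(k:ℤ))) *
                (r₂ ^ (2*(j:ℤ) - 1) * r₂ ^ (1 - 2*(j:ℤ)))) := by ring
          _ = A k := by rw [e1, e2]; ring
      rw [hrhs]
      calc s ^ (2*(k:ℤ) - 1) * r₂ ^ (2*(j:ℤ) - 1) * ∫ t in Set.Ioc s (2*s), W k t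
          = s ^ (2 * (k:ℤ) - 1) * r₂ ^ (2 * (j:ℤ) - 1) *
            ∫ lam in Set.Ioc s (2 * s), ∫ ξ in Set.Ioc r₂ (2 * r₂),
              ‖mixedPartialWithin k j μ lam ξ‖ ^ 2 := by rw [hW]
        _ ≤ A k := h
    -- assemble
    have hKfac : 0 ≤ K k * r₁ ^ (1 - 2*(i:ℤ)) * (φ r₁) ^ (2*(k:ℤ) - 1) := by
      have := hK0 k hk
      positivity
    have hπ : (0:ℝ) ≤ r₁ ^ (2 * (i : ℤ) - 1) * r₂ ^ (2 * (j : ℤ) - 1) := by positivity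
    calc r₁ ^ (2 * (i : ℤ) - 1) * r₂ ^ (2 * (j : ℤ) - 1) *
          ∫ lam in Set.Ioc r₁ (2*r₁), (β lam ^ (Eexp p q i k)) ^ 2 * W k (φ lam)
        ≤ r₁ ^ (2 * (i : ℤ) - 1) * r₂ ^ (2 * (j : ℤ) - 1) *
            ((K k * r₁ ^ (1 - 2*(i:ℤ)) * (φ r₁) ^ (2*(k:ℤ) - 1)) *
              ((∫ t in Set.Ioc (φ r₁) (2 * φ r₁), W k t)
                + ∫ t in Set.Ioc (2 * φ r₁) (4 * φ r₁), W k t)) := by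
          refine mul_le_mul_of_nonneg_left ?_ hπ
          refine le_trans hmono1 ?_
          refine mul_le_mul_of_nonneg_left ?_ hKfac
          rw [hchg, ← hsplit2]
          exact hsplit1
      _ ≤ r₁ ^ (2 * (i : ℤ) - 1) * r₂ ^ (2 * (j : ℤ) - 1) *
            ((K k * r₁ ^ (1 - 2*(i:ℤ)) * (φ r₁) ^ (2*(k:ℤ) - 1)) *
              ((A k * (φ r₁) ^ (1 - 2*(k:ℤ)) * r₂ ^ (1 - 2*(j:ℤ)))
                + A k * (2 * φ r₁) ^ (1 - 2*(k:ℤ)) * r₂ ^ (1 - 2*(j:ℤ)))) := by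
          refine mul_le_mul_of_nonneg_left ?_ hπ
          refine mul_le_mul_of_nonneg_left ?_ hKfac
          refine add_le_add (hbound (φ r₁) hxpos) ?_
          have h2 := hbound (2 * φ r₁) (by linarith)
          rw [show 2 * (2 * φ r₁) = 4 * φ r₁ by ring] at h2
          exact h2
      _ = K k * A k * (1 + (2:ℝ) ^ ((1:ℤ) - 2*(k:ℤ))) := by
          rw [mul_zpow (2:ℝ) (φ r₁) (1 - 2*(k:ℤ))]
          have e1 : r₁ ^ (2*(i:ℤ) - 1) * r₁ ^ (1 - 2*(i:ℤ)) = 1 :=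
            zpow_pair (ne_of_gt hr₁) (by ring)
          have e2 : r₂ ^ (2*(j:ℤ) - 1) * r₂ ^ (1 - 2*(j:ℤ)) = 1 :=
            zpow_pair (ne_of_gt hr₂) (by ring)
          have e3 : (φ r₁) ^ (2*(k:ℤ) - 1) * (φ r₁) ^ (1 - 2*(k:ℤ)) = 1 :=
            zpow_pair (ne_of_gt hxpos) (by ring)
          calc r₁ ^ (2 * (i : ℤ) - 1) * r₂ ^ (2 * (j : ℤ) - 1) *
              ((K k * r₁ ^ (1 - 2*(i:ℤ)) * (φ r₁) ^ (2*(k:ℤ) - 1)) *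
                ((A k * (φ r₁) ^ (1 - 2*(k:ℤ)) * r₂ ^ (1 - 2*(j:ℤ)))
                  + A k * ((2:ℝ) ^ ((1:ℤ) - 2*(k:ℤ)) * (φ r₁) ^ (1 - 2*(k:ℤ)))
                      * r₂ ^ (1 - 2*(j:ℤ))))
              = K k * A k * (1 + (2:ℝ) ^ ((1:ℤ) - 2*(k:ℤ))) *
                  ((r₁ ^ (2*(i:ℤ) - 1) * r₁ ^ (1 - 2*(i:ℤ))) *
                    (r₂ ^ (2*(j:ℤ) - 1) * r₂ ^ (1 - 2*(j:ℤ))) *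
                      ((φ r₁) ^ (2*(k:ℤ) - 1) * (φ r₁) ^ (1 - 2*(k:ℤ)))) := by ring
            _ = K k * A k * (1 + (2:ℝ) ^ ((1:ℤ) - 2*(k:ℤ))) := by rw [e1, e2, e3]; ring
  -- put everything together
  have hπpos : (0:ℝ) < r₁ ^ (2 * (i : ℤ) - 1) * r₂ ^ (2 * (j : ℤ) - 1) := by positivity
  calc r₁ ^ (2 * (i : ℤ) - 1) * r₂ ^ (2 * (j : ℤ) - 1) *
        ∫ lam in Set.Ioc r₁ (2*r₁), ∫ ξ in Set.Ioc r₂ (2*r₂),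
          ‖mixedPartialWithin i j (fun l ξ => μ (φ l) ξ) lam ξ‖ ^ 2
      ≤ r₁ ^ (2 * (i : ℤ) - 1) * r₂ ^ (2 * (j : ℤ) - 1) *
          (((i:ℝ)+1) * ∑ k ∈ Finset.range (i+1), (genCoef b a p q i k)^2 *
            ∫ lam in Set.Ioc r₁ (2*r₁), (β lam ^ (Eexp p q i k)) ^ 2 * W k (φ lam)) := by
        rw [← houter2]
        exact mul_le_mul_of_nonneg_left houter (le_of_lt hπpos)
    _ = ∑ k ∈ Finset.range (i+1), ((i:ℝ)+1) * (genCoef b a p q i k)^2 *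
          (r₁ ^ (2 * (i : ℤ) - 1) * r₂ ^ (2 * (j : ℤ) - 1) *
            ∫ lam in Set.Ioc r₁ (2*r₁), (β lam ^ (Eexp p q i k)) ^ 2 * W k (φ lam)) := by
        rw [Finset.mul_sum, Finset.mul_sum]
        exact Finset.sum_congr rfl fun k hk => by ring
    _ ≤ ∑ k ∈ Finset.range (i+1), ((i:ℝ)+1) * (genCoef b a p q i k)^2 *
          (K k * A k * (1 + (2:ℝ) ^ ((1:ℤ) - 2*(k:ℤ)))) := by
        refine Finset.sum_le_sum fun k hk => ?_
        have hk' : k ≤ i := Nat.lt_succ_iff.mp (Finset.mem_range.1 hk)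
        exact mul_le_mul_of_nonneg_left (hcore k hk') (by positivity)


lemma zpow_le_dyadic {r t : ℝ} (hr : 0 < r) (h1 : r ≤ t) (h2 : t ≤ 2*r) (m : ℤ) :
    t ^ m ≤ 2 ^ m.natAbs * r ^ m := by
  have ht : 0 < t := lt_of_lt_of_le hr h1
  obtain ⟨n, rfl | rfl⟩ := m.eq_nat_or_neg
  · rw [zpow_natCast, zpow_natCast, Int.natAbs_natCast]
    calc t ^ n ≤ (2*r) ^ n := pow_le_pow_left₀ ht.le h2 n
      _ = 2 ^ n * r ^ n := mul_pow 2 r n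
  · rw [zpow_neg, zpow_neg, zpow_natCast, zpow_natCast, Int.natAbs_neg, Int.natAbs_natCast]
    have h3 : r ^ n ≤ t ^ n := pow_le_pow_left₀ hr.le h1 n
    have h5 : (t ^ n)⁻¹ ≤ (r ^ n)⁻¹ :=
      inv_anti₀ (pow_pos hr n) h3
    refine le_trans h5 ?_
    have h4 : (1:ℝ) ≤ 2 ^ n := one_le_pow₀ one_le_two
    have h6 : (0:ℝ) ≤ (r ^ n)⁻¹ := by positivity
    nlinarith

lemma marc_congr {ρ σ : ℕ} {f g : ℝ → ℝ → ℂ} (h : ∀ l ∈ S, f l = g l)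
    (hf : MarcinkiewiczCond ρ σ f) : MarcinkiewiczCond ρ σ g := by
  intro i j hi hij
  obtain ⟨A, hA⟩ := hf i j hi hij
  refine ⟨A, fun r₁ r₂ hr₁ hr₂ => ?_⟩
  have hmp : ∀ lam ∈ S, ∀ ξ : ℝ,
      mixedPartialWithin i j g lam ξ = mixedPartialWithin i j f lam ξ := by
    intro lam hlam ξ
    have hEq : Set.EqOn (fun l => iteratedDerivWithin j (fun t => g l t) S ξ)
        (fun l => iteratedDerivWithin j (fun t => f l t) S ξ) S := by
      intro l hl
      simp only
      rw [show (fun t => g l t) = (fun t => f l t) from by rw [← h l hl]]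
    exact iteratedDerivWithin_congr hEq hlam
  have hdint : (∫ lam in Set.Ioc r₁ (2*r₁), ∫ ξ in Set.Ioc r₂ (2*r₂),
        ‖mixedPartialWithin i j g lam ξ‖ ^ 2)
      = ∫ lam in Set.Ioc r₁ (2*r₁), ∫ ξ in Set.Ioc r₂ (2*r₂),
        ‖mixedPartialWithin i j f lam ξ‖ ^ 2 := by
    refine setIntegral_congr_fun measurableSet_Ioc (fun lam hlam => ?_)
    have hlamS : lam ∈ S := lt_trans hr₁ hlam.1
    simp only [hmp lam hlamS]
  rw [hdint]
  exact hA r₁ r₂ hr₁ hr₂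

lemma dir_sq {ρ σ : ℕ} {μ : ℝ → ℝ → ℂ}
    (hsmooth : ContDiffOn ℝ ((ρ + σ : ℕ) : ℕ) (fun z : ℝ × ℝ => μ z.1 z.2) P)
    (hμ : MarcinkiewiczCond ρ σ μ) :
    MarcinkiewiczCond ρ σ (fun l ξ => μ (l ^ 2) ξ) := by
  have h := forward (φ := fun x : ℝ => x ^ 2) (β := fun x : ℝ => x)
    (a := 2) (b := 1) (p := 1) (q := 0) hsmooth
    (by norm_num)
    (fun t ht => ht)
    (fun t ht => by simpa using hasDerivAt_id' t)
    (fun t ht => by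
      have := hasDerivAt_pow 2 t
      simpa using this)
    (fun t ht => by have h0 : (0:ℝ) < t := ht; exact pow_pos h0 2)
    ((contDiff_id.pow 2).contDiffOn)
    (fun x hx y hy hxy => by
      have hx' : (0:ℝ) < x := hx
      show x ^ 2 < y ^ 2
      nlinarith)
    (fun r hr => by
      ext y
      constructor
      · rintro ⟨x, hx, rfl⟩
        have hx1 : r < x := hx.1
        have hx2 : x ≤ 2*r := hx.2
        constructor
        · show r ^ 2 < x ^ 2
          nlinarith
        · show x ^ 2 ≤ (2*r) ^ 2
          nlinarith
      · intro hy
        have hy0 : (0:ℝ) < y := lt_trans (by positivity) hy.1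
        refine ⟨Real.sqrt y, ⟨?_, ?_⟩, Real.sq_sqrt hy0.le⟩
        · rw [show r = Real.sqrt (r^2) from (Real.sqrt_sq hr.le).symm]
          exact Real.sqrt_lt_sqrt (by positivity) hy.1
        · calc Real.sqrt y ≤ Real.sqrt ((2*r)^2) := Real.sqrt_le_sqrt hy.2
            _ = 2*r := Real.sqrt_sq (by linarith)
      )
    (fun r hr => by
      show (2*r) ^ 2 ≤ 4 * r ^ 2
      nlinarith)
    ?_ hμ
  · exact h
  · intro i k hk hi
    refine ⟨2 ^ (2 * Eexp 1 0 i k - 1).natAbs, by positivity, ?_⟩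
    intro r t hr ht
    have ht0 : 0 < t := lt_trans hr ht.1
    set m : ℤ := 2 * Eexp 1 0 i k - 1 with hm
    have hb := zpow_le_dyadic hr ht.1.le ht.2 m
    have hrw : (2:ℝ) ^ m.natAbs * r ^ (1 - 2*(i:ℤ)) * ((r^2) ^ (2*(k:ℤ) - 1))
        = 2 ^ m.natAbs * r ^ m := by
      rw [show (r:ℝ)^(2:ℕ) = r ^ ((2:ℕ):ℤ) from (zpow_natCast r 2).symm, ← zpow_mul]
      rw [mul_assoc, ← zpow_add₀ (ne_of_gt hr)]
      congr 2
      simp only [hm, Eexp]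
      push_cast
      ring
    rw [mul_assoc] at hrw ⊢
    rw [hrw]
    calc t ^ m / 2 ≤ t ^ m := by
          have : (0:ℝ) ≤ t ^ m := le_of_lt (zpow_pos ht0 m)
          linarith
      _ ≤ 2 ^ m.natAbs * r ^ m := hb

lemma dir_sqrt {ρ σ : ℕ} {ν : ℝ → ℝ → ℂ}
    (hsmooth : ContDiffOn ℝ ((ρ + σ : ℕ) : ℕ) (fun z : ℝ × ℝ => ν z.1 z.2) P)
    (hν : MarcinkiewiczCond ρ σ ν) :
    MarcinkiewiczCond ρ σ (fun l ξ => ν (Real.sqrt l) ξ) := by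
  have hsq2 : ∀ r : ℝ, 0 < r → Real.sqrt (2*r) ≤ 2 * Real.sqrt r := by
    intro r hr
    calc Real.sqrt (2*r) ≤ Real.sqrt (4*r) := Real.sqrt_le_sqrt (by linarith)
      _ = Real.sqrt 4 * Real.sqrt r := Real.sqrt_mul (by norm_num) r
      _ = 2 * Real.sqrt r := by
          rw [show (4:ℝ) = 2^2 by norm_num, Real.sqrt_sq (by norm_num)]
  have h := forward (φ := Real.sqrt) (β := Real.sqrt)
    (a := 1/2) (b := 1/2) (p := -1) (q := -1) hsmooth
    (by norm_num)
    (fun t ht => Real.sqrt_pos.2 ht)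
    (fun t ht => by
      have h1 := Real.hasDerivAt_sqrt (ne_of_gt (show (0:ℝ) < t from ht))
      have h2 : 1 / (2 * Real.sqrt t) = 1/2 * Real.sqrt t ^ (-1 : ℤ) := by
        rw [zpow_neg, zpow_one]
        field_simp
      rwa [h2] at h1)
    (fun t ht => by
      have h1 := Real.hasDerivAt_sqrt (ne_of_gt (show (0:ℝ) < t from ht))
      have h2 : 1 / (2 * Real.sqrt t) = 1/2 * Real.sqrt t ^ (-1 : ℤ) := by
        rw [zpow_neg, zpow_one]
        field_simp
      rwa [h2] at h1)
    (fun t ht => Real.sqrt_pos.2 ht)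
    (fun t ht => (Real.contDiffAt_sqrt (ne_of_gt (show (0:ℝ) < t from ht))).contDiffWithinAt)
    (fun x hx y hy hxy => Real.sqrt_lt_sqrt (le_of_lt hx) hxy)
    (fun r hr => by
      ext y
      constructor
      · rintro ⟨x, hx, rfl⟩
        exact ⟨Real.sqrt_lt_sqrt hr.le hx.1, Real.sqrt_le_sqrt hx.2⟩
      · intro hy
        have hy0 : 0 < y := lt_of_le_of_lt (Real.sqrt_nonneg r) hy.1
        refine ⟨y^2, ⟨?_, ?_⟩, Real.sqrt_sq hy0.le⟩
        · have h1 : Real.sqrt r < y := hy.1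
          nlinarith [Real.sq_sqrt hr.le, Real.sqrt_nonneg r]
        · have h2 : y ≤ Real.sqrt (2*r) := hy.2
          nlinarith [Real.sq_sqrt (show (0:ℝ) ≤ 2*r by linarith), Real.sqrt_nonneg (2*r)]
      )
    (fun r hr => by
      have := hsq2 r hr
      have h0 : 0 ≤ Real.sqrt r := Real.sqrt_nonneg r
      linarith)
    ?_ hν
  · exact h
  · intro i k hk hi
    set m : ℤ := 2 * Eexp (-1) (-1) i k - (-1) with hm
    refine ⟨2 * 2 ^ m.natAbs, by positivity, ?_⟩
    intro r t hr ht
    have ht0 : 0 < t := lt_trans hr ht.1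
    have hsr : 0 < Real.sqrt r := Real.sqrt_pos.2 hr
    have h1 : Real.sqrt r ≤ Real.sqrt t := Real.sqrt_le_sqrt ht.1.le
    have h2 : Real.sqrt t ≤ 2 * Real.sqrt r :=
      le_trans (Real.sqrt_le_sqrt ht.2) (hsq2 r hr)
    have hb := zpow_le_dyadic hsr h1 h2 m
    have hrw : (2:ℝ) * 2 ^ m.natAbs * r ^ (1 - 2*(i:ℤ)) * (Real.sqrt r ^ (2*(k:ℤ) - 1))
        = 2 * (2 ^ m.natAbs * Real.sqrt r ^ m) := by
      have hr1 : r ^ (1 - 2*(i:ℤ)) = Real.sqrt r ^ ((2:ℤ) * (1 - 2*(i:ℤ))) := by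
        rw [zpow_mul]
        congr 1
        rw [show ((2:ℤ)) = ((2:ℕ):ℤ) from by norm_num, zpow_natCast, Real.sq_sqrt hr.le]
      rw [hr1, mul_assoc, mul_assoc, ← zpow_add₀ (ne_of_gt hsr)]
      congr 2
      simp only [hm, Eexp]
      push_cast
      ring
    rw [hrw]
    have hdiv : Real.sqrt t ^ m / (1/2) = 2 * Real.sqrt t ^ m := by ring
    rw [hdiv]
    have h2b : (0:ℝ) ≤ 2 := by norm_num
    nlinarith [zpow_pos (Real.sqrt_pos.2 ht0) m]


end Stmt16Aux

/-- Lemma 6.5, integer-order form: a function `μ` of class `C^{ρ+σ}`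
on `(0,∞)²` satisfies the Marcinkiewicz condition of order `(ρ,σ)` if and only if
`ν(λ,ξ) = μ(λ²,ξ)` does. -/
theorem stmt_16 (ρ σ : ℕ) (μ : ℝ → ℝ → ℂ)
    (hsmooth : ContDiffOn ℝ (ρ + σ : ℕ)
      (fun p : ℝ × ℝ => μ p.1 p.2) (Set.Ioi 0 ×ˢ Set.Ioi 0)) :
    MarcinkiewiczCond ρ σ μ ↔ MarcinkiewiczCond ρ σ (fun lam ξ => μ (lam ^ 2) ξ) := by
  constructor
  · intro hμ
    exact Stmt16Aux.dir_sq hsmooth hμ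
  · intro hν
    have hsq : ContDiffOn ℝ ((ρ + σ : ℕ) : ℕ) (fun z : ℝ × ℝ => μ (z.1 ^ 2) z.2)
        Stmt16Aux.P := by
      have h1 : ContDiffOn ℝ ((ρ + σ : ℕ) : ℕ) (fun z : ℝ × ℝ => (z.1 ^ 2, z.2))
          Stmt16Aux.P :=
        ((contDiff_fst.pow 2).contDiffOn).prodMk (contDiff_snd.contDiffOn)
      exact hsmooth.comp h1 (fun z hz => ⟨by have h0 : (0:ℝ) < z.1 := hz.1; exact pow_pos h0 2, hz.2⟩)
    have h2 := Stmt16Aux.dir_sqrt (ν := fun lam ξ => μ (lam ^ 2) ξ) hsq hν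
    refine Stmt16Aux.marc_congr (f := fun l ξ => μ (Real.sqrt l ^ 2) ξ) ?_ h2
    intro l hl
    show (fun ξ => μ (Real.sqrt l ^ 2) ξ) = μ l
    rw [Real.sq_sqrt (le_of_lt hl)]
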